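/- arXiv:2501.00191 — 4 statements merged into one kernel-verified Lean document; each statement's English description precedes it below -/
import Mathlib

section
/- If the inverse demand functions are affine, p_j(z_j) = α_j − β_j z_j with β_j > 0, and the market maker's utility is the Walrasian welfare, then the network Cournot game with market maker is an exact potential game with potential P(x,y) = w(x, diag(A'x)+By) − Σ_{i,j} A_{ij} (β_j/2) x_{ij}^2, where w is the Walrasian welfare. -/
open Finset

noncomputable section

/-- Net consumption in each market: `z = diag(A'x) + By`. -/
def netCons {n m l : ℕ} (A : Fin n → Fin m → ℝ) (B : Fin m → Fin l → ℝ)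
    (x : Fin n → Fin m → ℝ) (y : Fin l → ℝ) : Fin m → ℝ :=
  fun j => (∑ i, A i j * x i j) + ∑ k, B j k * y k

/-- Producer `i`'s utility. -/
def prodUtil {n m l : ℕ} (A : Fin n → Fin m → ℝ) (B : Fin m → Fin l → ℝ)
    (p : Fin m → ℝ → ℝ) (C : Fin n → (Fin m → ℝ) → ℝ)
    (i : Fin n) (x : Fin n → Fin m → ℝ) (y : Fin l → ℝ) : ℝ :=
  (∑ j, A i j * x i j * p j (netCons A B x y j)) - C i (x i)

/-- The market maker's feasible set `Y = {y : 0 ≤ y ≤ c}`. -/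
def inY {l : ℕ} (c : Fin l → ℝ) (y : Fin l → ℝ) : Prop := ∀ k, 0 ≤ y k ∧ y k ≤ c k

/-- Producer `i`'s action set `A_i = {v ≥ 0 : A_{ij} = 0 → v_j = 0}`. -/
def inA {m : ℕ} (Ai : Fin m → ℝ) (v : Fin m → ℝ) : Prop :=
  ∀ j, 0 ≤ v j ∧ (Ai j = 0 → v j = 0)

/-- Nash equilibrium of the network Cournot game with market maker. -/
def NashEq {n m l : ℕ} (A : Fin n → Fin m → ℝ) (B : Fin m → Fin l → ℝ)
    (c : Fin l → ℝ) (p : Fin m → ℝ → ℝ) (C : Fin n → (Fin m → ℝ) → ℝ)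
    (w : (Fin n → Fin m → ℝ) → (Fin m → ℝ) → ℝ)
    (x : Fin n → Fin m → ℝ) (y : Fin l → ℝ) : Prop :=
  inY c y ∧ (∀ i, inA (A i) (x i)) ∧
  (∀ y', inY c y' → w x (netCons A B x y') ≤ w x (netCons A B x y)) ∧
  (∀ i xi, inA (A i) xi →
    prodUtil A B p C i (Function.update x i xi) y ≤ prodUtil A B p C i x y)

/-- Walrasian welfare for affine inverse demands `p_j(z) = α_j - β_j z`:
`w(x,z) = Σ_j (α_j z_j - β_j z_j²/2) - Σ_i C_i(x_i)`. -/
def walr {n m : ℕ} (α β : Fin m → ℝ) (C : Fin n → (Fin m → ℝ) → ℝ)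
    (x : Fin n → Fin m → ℝ) (z : Fin m → ℝ) : ℝ :=
  (∑ j, (α j * z j - β j / 2 * (z j) ^ 2)) - ∑ i, C i (x i)

/-- The potential `P(x,y) = w(x, diag(A'x)+By) - Σ_{i,j} A_{ij} (β_j/2) x_{ij}²`. -/
def pot {n m l : ℕ} (A : Fin n → Fin m → ℝ) (B : Fin m → Fin l → ℝ)
    (α β : Fin m → ℝ) (C : Fin n → (Fin m → ℝ) → ℝ)
    (x : Fin n → Fin m → ℝ) (y : Fin l → ℝ) : ℝ :=
  walr α β C x (netCons A B x y) - ∑ i, ∑ j, A i j * (β j / 2) * (x i j) ^ 2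


lemma sum_update_row {n : ℕ} {γ : Type*} (f : Fin n → γ → ℝ) (x : Fin n → γ) (i : Fin n) (xi : γ) :
    (∑ i', f i' (Function.update x i xi i')) = (∑ i', f i' (x i')) - f i (x i) + f i xi := by
  have h : (fun i' => f i' (Function.update x i xi i'))
      = Function.update (fun i' => f i' (x i')) i (f i xi) := by
    funext i'
    rcases eq_or_ne i' i with rfl | h
    · simp
    · simp [Function.update_of_ne h]
  rw [h, Finset.sum_update_of_mem (Finset.mem_univ i), ← Finset.sum_erase_add _ _ (Finset.mem_univ i)]
  simp [Finset.sdiff_singleton_eq_erase]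
  ring

/-- with affine inverse demands and Walrasian welfare, the game is an
exact potential game with potential `P`. -/
theorem exact_potential
    (n m l : ℕ)
    (A : Fin n → Fin m → ℝ) (hA : ∀ i j, A i j = 0 ∨ A i j = 1)
    (σ τ : Fin l → Fin m) (hστ : ∀ k, σ k ≠ τ k)
    (B : Fin m → Fin l → ℝ)
    (hB : ∀ j k, B j k = (if τ k = j then (1:ℝ) else 0) - (if σ k = j then 1 else 0))
    (c : Fin l → ℝ) (hc : ∀ k, 0 < c k)
    (α β : Fin m → ℝ) (hβ : ∀ j, 0 < β j)
    (C : Fin n → (Fin m → ℝ) → ℝ) :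
    (∀ (i : Fin n) (x : Fin n → Fin m → ℝ) (xi : Fin m → ℝ) (y : Fin l → ℝ),
        (∀ i', inA (A i') (x i')) → inA (A i) xi → inY c y →
        pot A B α β C (Function.update x i xi) y - pot A B α β C x y
          = prodUtil A B (fun j z => α j - β j * z) C i (Function.update x i xi) y
            - prodUtil A B (fun j z => α j - β j * z) C i x y) ∧
    (∀ (x : Fin n → Fin m → ℝ) (y y' : Fin l → ℝ),
        (∀ i', inA (A i') (x i')) → inY c y → inY c y' →
        pot A B α β C x y' - pot A B α β C x y
          = walr α β C x (netCons A B x y') - walr α β C x (netCons A B x y)) := by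
  constructor
  · intro i x xi y hx hxi hy
    have hz : ∀ j, netCons A B (Function.update x i xi) y j
        = netCons A B x y j + A i j * (xi j - x i j) := by
      intro j
      simp only [netCons]
      have h1 : (∑ i', A i' j * Function.update x i xi i' j)
          = (∑ i', A i' j * x i' j) - A i j * x i j + A i j * xi j :=
        sum_update_row (fun i' v => A i' j * v j) x i xi
      rw [h1]; ring
    have key : ∀ j, (α j * netCons A B (Function.update x i xi) y j
          - β j / 2 * (netCons A B (Function.update x i xi) y j) ^ 2)
        - (α j * netCons A B x y j - β j / 2 * (netCons A B x y j) ^ 2)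
        - A i j * (β j / 2) * (xi j) ^ 2 + A i j * (β j / 2) * (x i j) ^ 2
        = A i j * xi j * (α j - β j * netCons A B (Function.update x i xi) y j)
          - A i j * x i j * (α j - β j * netCons A B x y j) := by
      intro j
      rcases hA i j with h | h <;> rw [hz j, h] <;> ring
    have main : (∑ j, ((α j * netCons A B (Function.update x i xi) y j
          - β j / 2 * (netCons A B (Function.update x i xi) y j) ^ 2)
        - (α j * netCons A B x y j - β j / 2 * (netCons A B x y j) ^ 2)
        - A i j * (β j / 2) * (xi j) ^ 2 + A i j * (β j / 2) * (x i j) ^ 2))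
        = ∑ j, (A i j * xi j * (α j - β j * netCons A B (Function.update x i xi) y j)
          - A i j * x i j * (α j - β j * netCons A B x y j)) :=
      Finset.sum_congr rfl (fun j _ => key j)
    have hC : (∑ i', C i' (Function.update x i xi i'))
        = (∑ i', C i' (x i')) - C i (x i) + C i xi :=
      sum_update_row (fun i' v => C i' v) x i xi
    have hQ : (∑ i', ∑ j, A i' j * (β j / 2) * (Function.update x i xi i' j) ^ 2)
        = (∑ i', ∑ j, A i' j * (β j / 2) * (x i' j) ^ 2)
          - (∑ j, A i j * (β j / 2) * (x i j) ^ 2)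
          + ∑ j, A i j * (β j / 2) * (xi j) ^ 2 :=
      sum_update_row (fun i' v => ∑ j, A i' j * (β j / 2) * (v j) ^ 2) x i xi
    simp only [pot, walr, prodUtil, Function.update_self]
    rw [hC, hQ]
    simp only [Finset.sum_sub_distrib, Finset.sum_add_distrib] at main ⊢
    linarith [main]
  · intro x y y' _ _ _
    simp only [pot]
    ring
end
end

section
/- In the network Cournot game with affine inverse demand p_j(z_j)=α_j−β_j z_j (β_j>0), strictly increasing convex cost functions, and Walrasian welfare, any two Nash equilibria (x*,y*) and (x̃*,ỹ*) satisfy x* = x̃* and By* = Bỹ* (i.e., the equilibrium production quantities and the net flows into each market are unique). -/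
open Finset

noncomputable section

/-- Market maker's half of the first-order variational inequality at an equilibrium. -/
lemma market_key {n m l : ℕ} (A : Fin n → Fin m → ℝ) (B : Fin m → Fin l → ℝ)
    (c : Fin l → ℝ) (α β : Fin m → ℝ) (C : Fin n → (Fin m → ℝ) → ℝ)
    (x : Fin n → Fin m → ℝ) (y y' : Fin l → ℝ)
    (hy : inY c y) (hy' : inY c y')
    (hbest : ∀ y₀, inY c y₀ → walr α β C x (netCons A B x y₀) ≤ walr α β C x (netCons A B x y))
    (t : ℝ) (ht0 : 0 < t) (ht1 : t ≤ 1) :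
    (∑ j, (α j - β j * netCons A B x y j) * (∑ k, B j k * (y' k - y k)))
      ≤ t * ((1/2) * ∑ j, β j * (∑ k, B j k * (y' k - y k))^2) := by
  set z := netCons A B x y with hz
  set e : Fin m → ℝ := fun j => ∑ k, B j k * (y' k - y k) with he
  set yt : Fin l → ℝ := fun k => y k + t * (y' k - y k) with hyt
  have hytY : inY c yt := by
    intro k
    obtain ⟨h1, h2⟩ := hy k
    obtain ⟨h3, h4⟩ := hy' k
    simp only [hyt]
    constructor
    · nlinarith
    · nlinarith
  have hnet : ∀ j, netCons A B x yt j = z j + t * e j := by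
    intro j
    simp only [hz, netCons, he, hyt]
    have : ∀ k, B j k * (y k + t * (y' k - y k)) = B j k * y k + t * (B j k * (y' k - y k)) := by
      intro k; ring
    rw [Finset.sum_congr rfl (fun k _ => this k), Finset.sum_add_distrib, ← Finset.mul_sum]
    ring
  have hw := hbest yt hytY
  simp only [walr] at hw
  have hw2 : ∑ j, (α j * netCons A B x yt j - β j / 2 * (netCons A B x yt j)^2)
      ≤ ∑ j, (α j * z j - β j / 2 * (z j)^2) := by linarith
  have hterm : ∀ j, α j * netCons A B x yt j - β j / 2 * (netCons A B x yt j)^2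
      = (α j * z j - β j / 2 * (z j)^2)
        + (t * ((α j - β j * z j) * e j) - t^2 * ((1/2) * (β j * (e j)^2))) := by
    intro j; rw [hnet j]; ring
  rw [Finset.sum_congr rfl (fun j _ => hterm j), Finset.sum_add_distrib] at hw2
  have hw3 : ∑ j, (t * ((α j - β j * z j) * e j) - t^2 * ((1/2) * (β j * (e j)^2))) ≤ 0 := by
    linarith
  rw [Finset.sum_sub_distrib, ← Finset.mul_sum, ← Finset.mul_sum] at hw3
  have hS : ∑ j, ((1:ℝ)/2) * (β j * (e j)^2) = (1/2) * ∑ j, β j * (e j)^2 := by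
    rw [← Finset.mul_sum]
  rw [hS] at hw3
  have hmul : t * (∑ j, (α j - β j * z j) * e j) ≤ t * (t * ((1/2) * ∑ j, β j * (e j)^2)) := by
    nlinarith [hw3]
  exact le_of_mul_le_mul_left hmul ht0

/-- Producer `i`'s half of the first-order variational inequality at an equilibrium. -/
lemma prod_key {n m l : ℕ} (A : Fin n → Fin m → ℝ) (hA : ∀ i j, A i j = 0 ∨ A i j = 1)
    (B : Fin m → Fin l → ℝ) (α β : Fin m → ℝ) (C : Fin n → (Fin m → ℝ) → ℝ)
    (hCconv : ∀ i, ConvexOn ℝ {v : Fin m → ℝ | ∀ j, 0 ≤ v j} (C i))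
    (x : Fin n → Fin m → ℝ) (y : Fin l → ℝ) (hx : ∀ i, inA (A i) (x i))
    (hbest : ∀ i xi, inA (A i) xi →
      prodUtil A B (fun j z => α j - β j * z) C i (Function.update x i xi) y
        ≤ prodUtil A B (fun j z => α j - β j * z) C i x y)
    (i : Fin n) (xi' : Fin m → ℝ) (hxi' : inA (A i) xi')
    (t : ℝ) (ht0 : 0 < t) (ht1 : t ≤ 1) :
    ∑ j, A i j * (α j - β j * netCons A B x y j - β j * x i j) * (xi' j - x i j)
      ≤ (C i xi' - C i (x i)) + t * ∑ j, β j * A i j * (xi' j - x i j)^2 := by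
  set z := netCons A B x y with hz
  set δ : Fin m → ℝ := fun j => xi' j - x i j with hδ
  set v : Fin m → ℝ := fun j => x i j + t * δ j with hv
  have hvA : inA (A i) v := by
    intro j
    obtain ⟨h1, h2⟩ := hx i j
    obtain ⟨h3, h4⟩ := hxi' j
    constructor
    · simp only [hv, hδ]; nlinarith
    · intro h0; simp only [hv, hδ, h2 h0, h4 h0]; ring
  have hupd : ∀ j, ∑ a, A a j * Function.update x i v a j
      = (∑ a, A a j * x a j) + A i j * (t * δ j) := by
    intro j
    have h1 : ∀ a : Fin n, A a j * Function.update x i v a j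
        = A a j * x a j + (if a = i then A i j * (t * δ j) else 0) := by
      intro a
      by_cases h : a = i
      · subst h; rw [Function.update_self, if_pos rfl]; simp only [hv]; ring
      · rw [Function.update_of_ne h, if_neg h]; ring
    rw [Finset.sum_congr rfl (fun a _ => h1 a), Finset.sum_add_distrib,
      Finset.sum_ite_eq' Finset.univ i (fun _ => A i j * (t * δ j))]
    simp
  have hnet : ∀ j, netCons A B (Function.update x i v) y j = z j + A i j * (t * δ j) := by
    intro j
    simp only [netCons, hz]
    rw [hupd j]
    ring
  have h := hbest i v hvA
  simp only [prodUtil, Function.update_self] at h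
  have hCv : C i v - C i (x i) ≤ t * (C i xi' - C i (x i)) := by
    have hxm : x i ∈ {v : Fin m → ℝ | ∀ j, 0 ≤ v j} := fun j => (hx i j).1
    have hxm' : xi' ∈ {v : Fin m → ℝ | ∀ j, 0 ≤ v j} := fun j => (hxi' j).1
    have hvc : v = (1 - t) • (x i) + t • xi' := by
      funext j
      simp only [hv, hδ, Pi.add_apply, Pi.smul_apply, smul_eq_mul]
      ring
    have := (hCconv i).2 hxm hxm' (by linarith : (0:ℝ) ≤ 1 - t) (le_of_lt ht0) (by ring)
    rw [← hvc] at this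
    simp only [smul_eq_mul] at this
    linarith
  have haa : ∀ j, A i j * A i j = A i j := by
    intro j; rcases hA i j with h' | h' <;> rw [h'] <;> ring
  have hterm : ∀ j, A i j * v j * (α j - β j * netCons A B (Function.update x i v) y j)
      = A i j * x i j * (α j - β j * z j)
        + (t * (A i j * (α j - β j * z j - β j * x i j) * δ j)
            - t^2 * (β j * A i j * (δ j)^2)) := by
    intro j
    rw [hnet j]
    simp only [hv]
    linear_combination (-(β j * t * δ j * (x i j + t * δ j))) * haa j
  rw [Finset.sum_congr rfl (fun j _ => hterm j), Finset.sum_add_distrib,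
    Finset.sum_sub_distrib, ← Finset.mul_sum, ← Finset.mul_sum] at h
  have h2 : t * (∑ j, A i j * (α j - β j * z j - β j * x i j) * δ j)
      - t^2 * (∑ j, β j * A i j * (δ j)^2) ≤ t * (C i xi' - C i (x i)) := by
    linarith
  have hmul : t * (∑ j, A i j * (α j - β j * z j - β j * x i j) * δ j)
      ≤ t * ((C i xi' - C i (x i)) + t * ∑ j, β j * A i j * (δ j)^2) := by
    nlinarith [h2]
  have := le_of_mul_le_mul_left hmul ht0
  simpa [hδ] using this

/-- with affine inverse demands, strictly increasing convex costs and
Walrasian welfare, any two Nash equilibria have the same production quantities and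
the same net flows into each market. -/
theorem nash_equilibrium_essentially_unique
    (n m l : ℕ)
    (A : Fin n → Fin m → ℝ) (hA : ∀ i j, A i j = 0 ∨ A i j = 1)
    (σ τ : Fin l → Fin m) (hστ : ∀ k, σ k ≠ τ k)
    (B : Fin m → Fin l → ℝ)
    (hB : ∀ j k, B j k = (if τ k = j then (1:ℝ) else 0) - (if σ k = j then 1 else 0))
    (c : Fin l → ℝ) (hc : ∀ k, 0 < c k)
    (α β : Fin m → ℝ) (hβ : ∀ j, 0 < β j)
    (C : Fin n → (Fin m → ℝ) → ℝ)
    (hCcont : ∀ i, Continuous (C i))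
    (hCmono : ∀ i (v v' : Fin m → ℝ), (∀ j, v j ≤ v' j) → v ≠ v' → C i v < C i v')
    (hCconv : ∀ i, ConvexOn ℝ {v : Fin m → ℝ | ∀ j, 0 ≤ v j} (C i))
    (hC0 : ∀ i, C i 0 = 0)
    (x x' : Fin n → Fin m → ℝ) (y y' : Fin l → ℝ)
    (hxy : NashEq A B c (fun j z => α j - β j * z) C (walr α β C) x y)
    (hxy' : NashEq A B c (fun j z => α j - β j * z) C (walr α β C) x' y') :
    x = x' ∧ ∀ j, (∑ k, B j k * y k) = ∑ k, B j k * y' k := by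
  obtain ⟨hYy, hXx, hMy, hPx⟩ := hxy
  obtain ⟨hYy', hXx', hMy', hPx'⟩ := hxy'
  set z := netCons A B x y with hz
  set z' := netCons A B x' y' with hz'
  set e : Fin m → ℝ := fun j => ∑ k, B j k * (y' k - y k) with he
  -- the two "R" quadratic budgets agree between the two applications
  set R : ℝ := ∑ i, ∑ j, β j * A i j * (x' i j - x i j)^2 with hR
  set E : ℝ := (1/2) * ∑ j, β j * (e j)^2 with hE
  set Q : ℝ := (∑ j, β j * (z' j - z j)^2) + R with hQ
  have he' : ∀ j, ∑ k, B j k * (y k - y' k) = -(e j) := by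
    intro j
    simp only [he]
    rw [← Finset.sum_neg_distrib]
    exact Finset.sum_congr rfl fun k _ => by ring
  have hD : ∀ j, z' j - z j = (∑ i, A i j * (x' i j - x i j)) + e j := by
    intro j
    have h1 : ∑ i, A i j * (x' i j - x i j) = (∑ i, A i j * x' i j) - ∑ i, A i j * x i j := by
      rw [← Finset.sum_sub_distrib]
      exact Finset.sum_congr rfl fun i _ => by ring
    have h2 : e j = (∑ k, B j k * y' k) - ∑ k, B j k * y k := by
      simp only [he]
      rw [← Finset.sum_sub_distrib]
      exact Finset.sum_congr rfl fun k _ => by ring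
    simp only [hz, hz', netCons]
    rw [h1, h2]
    ring
  -- main inequality : Q ≤ t * (2R + 2E) for every t ∈ (0,1]
  have hQle : ∀ t : ℝ, 0 < t → t ≤ 1 → Q ≤ t * (2*R + 2*E) := by
    intro t ht0 ht1
    -- equilibrium 1, deviation towards (x',y')
    have hP1 : (∑ i, ∑ j, A i j * (α j - β j * z j - β j * x i j) * (x' i j - x i j))
        ≤ (∑ i, (C i (x' i) - C i (x i))) + t * R := by
      have h := Finset.sum_le_sum (fun i (_ : i ∈ Finset.univ) =>
        prod_key A hA B α β C hCconv x y hXx hPx i (x' i) (hXx' i) t ht0 ht1)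
      rw [Finset.sum_add_distrib, ← Finset.mul_sum] at h
      exact h
    have hM1 : (∑ j, (α j - β j * z j) * (e j)) ≤ t * E := by
      exact market_key A B c α β C x y y' hYy hYy' hMy t ht0 ht1
    -- equilibrium 2, deviation towards (x,y)
    have hP2 : (∑ i, ∑ j, A i j * (α j - β j * z' j - β j * x' i j) * (x i j - x' i j))
        ≤ (∑ i, (C i (x i) - C i (x' i))) + t * R := by
      have h := Finset.sum_le_sum (fun i (_ : i ∈ Finset.univ) =>
        prod_key A hA B α β C hCconv x' y' hXx' hPx' i (x i) (hXx i) t ht0 ht1)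
      rw [Finset.sum_add_distrib, ← Finset.mul_sum] at h
      have hRR : ∑ i, ∑ j, β j * A i j * (x i j - x' i j)^2 = R := by
        rw [hR]
        exact Finset.sum_congr rfl fun i _ => Finset.sum_congr rfl fun j _ => by ring
      rw [hRR] at h
      exact h
    have hM2 : (∑ j, (α j - β j * z' j) * (∑ k, B j k * (y k - y' k))) ≤ t * E := by
      have h := market_key A B c α β C x' y' y hYy' hYy hMy' t ht0 ht1
      have hEE : (1/2) * ∑ j, β j * (∑ k, B j k * (y k - y' k))^2 = E := by
        rw [hE]
        congr 1
        exact Finset.sum_congr rfl fun j _ => by rw [he' j]; ring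
      rw [hEE] at h
      exact h
    -- the algebraic identity :  sum of the four left sides = Q
    have hΔC : (∑ i, (C i (x' i) - C i (x i))) + (∑ i, (C i (x i) - C i (x' i))) = 0 := by
      rw [← Finset.sum_add_distrib]
      rw [Finset.sum_eq_zero]
      intro i _; ring
    have hiden :
        (∑ i, ∑ j, A i j * (α j - β j * z j - β j * x i j) * (x' i j - x i j))
        + (∑ j, (α j - β j * z j) * (e j))
        + ((∑ i, ∑ j, A i j * (α j - β j * z' j - β j * x' i j) * (x i j - x' i j))
          + (∑ j, (α j - β j * z' j) * (∑ k, B j k * (y k - y' k))))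
        = Q := by
      have c1 : (∑ i, ∑ j, A i j * (α j - β j * z j - β j * x i j) * (x' i j - x i j))
          = ∑ j, ∑ i, A i j * (α j - β j * z j - β j * x i j) * (x' i j - x i j) :=
        Finset.sum_comm
      have c2 : (∑ i, ∑ j, A i j * (α j - β j * z' j - β j * x' i j) * (x i j - x' i j))
          = ∑ j, ∑ i, A i j * (α j - β j * z' j - β j * x' i j) * (x i j - x' i j) :=
        Finset.sum_comm
      have c3 : R = ∑ j, ∑ i, β j * A i j * (x' i j - x i j)^2 := by
        rw [hR]; exact Finset.sum_comm
      have perj : ∀ j,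
          (∑ i, A i j * (α j - β j * z j - β j * x i j) * (x' i j - x i j))
          + (α j - β j * z j) * (e j)
          + ((∑ i, A i j * (α j - β j * z' j - β j * x' i j) * (x i j - x' i j))
            + (α j - β j * z' j) * (∑ k, B j k * (y k - y' k)))
          = β j * (z' j - z j)^2 + ∑ i, β j * A i j * (x' i j - x i j)^2 := by
        intro j
        have hsum_i : (∑ i, A i j * (α j - β j * z j - β j * x i j) * (x' i j - x i j))
            + (∑ i, A i j * (α j - β j * z' j - β j * x' i j) * (x i j - x' i j))
            = β j * (z' j - z j) * (∑ i, A i j * (x' i j - x i j))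
              + ∑ i, β j * A i j * (x' i j - x i j)^2 := by
          rw [← Finset.sum_add_distrib, Finset.mul_sum, ← Finset.sum_add_distrib]
          exact Finset.sum_congr rfl fun i _ => by ring
        rw [he' j]
        linear_combination hsum_i + (-(β j) * (z' j - z j)) * hD j
      calc (∑ i, ∑ j, A i j * (α j - β j * z j - β j * x i j) * (x' i j - x i j))
            + (∑ j, (α j - β j * z j) * (e j))
            + ((∑ i, ∑ j, A i j * (α j - β j * z' j - β j * x' i j) * (x i j - x' i j))
              + (∑ j, (α j - β j * z' j) * (∑ k, B j k * (y k - y' k))))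
          = ∑ j, ((∑ i, A i j * (α j - β j * z j - β j * x i j) * (x' i j - x i j))
              + (α j - β j * z j) * (e j)
              + ((∑ i, A i j * (α j - β j * z' j - β j * x' i j) * (x i j - x' i j))
                + (α j - β j * z' j) * (∑ k, B j k * (y k - y' k)))) := by
            rw [c1, c2, ← Finset.sum_add_distrib, ← Finset.sum_add_distrib,
              ← Finset.sum_add_distrib]
        _ = ∑ j, (β j * (z' j - z j)^2 + ∑ i, β j * A i j * (x' i j - x i j)^2) :=
            Finset.sum_congr rfl fun j _ => perj j
        _ = Q := by rw [Finset.sum_add_distrib, hQ, c3]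
    linarith [hP1, hM1, hP2, hM2, hΔC, hiden]
  -- deduce Q ≤ 0 from the family of inequalities
  have hRnn : 0 ≤ R := by
    rw [hR]
    apply Finset.sum_nonneg; intro i _
    apply Finset.sum_nonneg; intro j _
    have hAnn : 0 ≤ A i j := by rcases hA i j with h | h <;> rw [h] <;> norm_num
    exact mul_nonneg (mul_nonneg (hβ j).le hAnn) (sq_nonneg _)
  have hEnn : 0 ≤ E := by
    rw [hE]
    apply mul_nonneg (by norm_num)
    apply Finset.sum_nonneg; intro j _
    exact mul_nonneg (hβ j).le (sq_nonneg _)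
  have hQnn : 0 ≤ Q := by
    rw [hQ]
    apply add_nonneg _ hRnn
    apply Finset.sum_nonneg; intro j _
    exact mul_nonneg (hβ j).le (sq_nonneg _)
  have hQ0 : Q = 0 := by
    by_contra hne
    have hQpos : 0 < Q := lt_of_le_of_ne hQnn (Ne.symm hne)
    have h1 : Q ≤ 2*R + 2*E := by have := hQle 1 one_pos le_rfl; linarith
    have hRRpos : 0 < 2*R + 2*E := lt_of_lt_of_le hQpos h1
    have ht0 : 0 < Q / (2 * (2*R + 2*E)) := by positivity
    have ht1 : Q / (2 * (2*R + 2*E)) ≤ 1 := by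
      rw [div_le_one (by positivity)]
      nlinarith
    have h2 := hQle _ ht0 ht1
    rw [div_mul_eq_mul_div, mul_comm] at h2
    have : Q ≤ Q / 2 := by
      calc Q ≤ (2*R + 2*E) * Q / (2 * (2*R + 2*E)) := h2
        _ = Q / 2 := by rw [mul_comm (2*R + 2*E) Q, mul_div_mul_right _ _ (ne_of_gt hRRpos)]
    linarith
  -- each summand of Q vanishes
  have hzsum : (∑ j, β j * (z' j - z j)^2) = 0 ∧ R = 0 := by
    have h1 : 0 ≤ ∑ j, β j * (z' j - z j)^2 := by
      apply Finset.sum_nonneg; intro j _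
      exact mul_nonneg (hβ j).le (sq_nonneg _)
    constructor <;> [skip; skip] <;> rw [hQ] at hQ0 <;> linarith
  have hzeq : ∀ j, z' j = z j := by
    intro j
    have h0 := hzsum.1
    have h1 : ∀ j ∈ Finset.univ, (0:ℝ) ≤ β j * (z' j - z j)^2 := by
      intro j _; exact mul_nonneg (hβ j).le (sq_nonneg _)
    have h2 := (Finset.sum_eq_zero_iff_of_nonneg h1).mp h0 j (Finset.mem_univ j)
    have hb := hβ j
    have : (z' j - z j)^2 = 0 := by
      by_contra hcon
      have : 0 < (z' j - z j)^2 := lt_of_le_of_ne (sq_nonneg _) (Ne.symm hcon)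
      nlinarith
    nlinarith [sq_nonneg (z' j - z j), this]
  have hxeq : x = x' := by
    funext i j
    have h1 : ∀ i ∈ Finset.univ, (0:ℝ) ≤ ∑ j, β j * A i j * (x' i j - x i j)^2 := by
      intro i _
      apply Finset.sum_nonneg; intro j _
      have hAnn : 0 ≤ A i j := by rcases hA i j with h | h <;> rw [h] <;> norm_num
      exact mul_nonneg (mul_nonneg (hβ j).le hAnn) (sq_nonneg _)
    have h2 := (Finset.sum_eq_zero_iff_of_nonneg h1).mp hzsum.2 i (Finset.mem_univ i)
    have h3 : ∀ j ∈ Finset.univ, (0:ℝ) ≤ β j * A i j * (x' i j - x i j)^2 := by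
      intro j _
      have hAnn : 0 ≤ A i j := by rcases hA i j with h | h <;> rw [h] <;> norm_num
      exact mul_nonneg (mul_nonneg (hβ j).le hAnn) (sq_nonneg _)
    have h4 := (Finset.sum_eq_zero_iff_of_nonneg h3).mp h2 j (Finset.mem_univ j)
    rcases hA i j with h | h
    · rw [(hXx i j).2 h, (hXx' i j).2 h]
    · rw [h] at h4
      have hb := hβ j
      have h5 : (x' i j - x i j)^2 = 0 := by nlinarith
      have := pow_eq_zero_iff (n := 2) (by norm_num) |>.mp h5
      linarith [this]
  refine ⟨hxeq, fun j => ?_⟩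
  have hzj := hzeq j
  simp only [hz, hz', netCons] at hzj
  have hxs : ∑ i, A i j * x' i j = ∑ i, A i j * x i j := by
    rw [hxeq]
  linarith [hzj, hxs]
end
end

section
/- If the market maker's utility is the Walrasian welfare w(x,z) = Σ_j ∫_0^{z_j} p_j(s) ds − Σ_i C_i(x_i), y is a best response of the market maker to x, and z = diag(A'x)+By, then for every link k: p_{σ_k}(z_{σ_k}) < p_{τ_k}(z_{τ_k}) implies y_k = c_k, and p_{σ_k}(z_{σ_k}) > p_{τ_k}(z_{τ_k}) implies y_k = 0. That is, any price difference across a link at a market-maker optimum forces the link to be saturated in the direction of the higher-priced market. -/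
open Finset Topology Filter

noncomputable section

/-- Walrasian welfare `w(x,z) = Σ_j ∫_0^{z_j} p_j(s) ds - Σ_i C_i(x_i)`. -/
def walrW {n m : ℕ} (p : Fin m → ℝ → ℝ) (C : Fin n → (Fin m → ℝ) → ℝ)
    (x : Fin n → Fin m → ℝ) (z : Fin m → ℝ) : ℝ :=
  (∑ j, ∫ s in (0:ℝ)..(z j), p j s) - ∑ i, C i (x i)

/-- with Walrasian welfare, at a market-maker best response any price
difference across a link forces the link to be saturated in the direction of the
higher-priced market. -/
theorem walrasian_price_difference_saturation
    (n m l : ℕ)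
    (A : Fin n → Fin m → ℝ)
    (σ τ : Fin l → Fin m) (hστ : ∀ k, σ k ≠ τ k)
    (B : Fin m → Fin l → ℝ)
    (hB : ∀ j k, B j k = (if τ k = j then (1:ℝ) else 0) - (if σ k = j then 1 else 0))
    (c : Fin l → ℝ) (hc : ∀ k, 0 < c k)
    (p : Fin m → ℝ → ℝ) (hpcont : ∀ j, Continuous (p j))
    (C : Fin n → (Fin m → ℝ) → ℝ)
    (x : Fin n → Fin m → ℝ) (y : Fin l → ℝ)
    (hy : inY c y)
    (hbr : ∀ y', inY c y' →
      walrW p C x (netCons A B x y') ≤ walrW p C x (netCons A B x y))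
    (k : Fin l) :
    (p (σ k) (netCons A B x y (σ k)) < p (τ k) (netCons A B x y (τ k)) → y k = c k) ∧
    (p (τ k) (netCons A B x y (τ k)) < p (σ k) (netCons A B x y (σ k)) → y k = 0) := by
  classical
  set zσ := netCons A B x y (σ k) with hzσdef
  set zτ := netCons A B x y (τ k) with hzτdef
  set f : ℝ → ℝ := fun t =>
    (∫ s in zτ..(zτ + t), p (τ k) s) + (∫ s in zσ..(zσ - t), p (σ k) s) with hfdef
  -- Step 1: feasible perturbations give f t ≤ 0
  have key : ∀ t : ℝ, 0 ≤ y k + t → y k + t ≤ c k → f t ≤ 0 := by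
    intro t ht0 htc
    set y' := Function.update y k (y k + t) with hy'def
    have hy'Y : inY c y' := by
      intro k'
      by_cases h : k' = k
      · subst h; simp only [hy'def, Function.update_self]; exact ⟨ht0, htc⟩
      · simp only [hy'def, Function.update_of_ne h]; exact hy k'
    have hz' : ∀ j, netCons A B x y' j = netCons A B x y j + B j k * t := by
      intro j
      have hsum : (∑ k', B j k' * y' k') = (∑ k', B j k' * y k') + B j k * t := by
        have : (∑ k', (B j k' * y' k' - B j k' * y k')) = B j k * t := by
          rw [Finset.sum_eq_single k]
          · simp only [hy'def, Function.update_self]; ring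
          · intro b _ hb; simp [hy'def, Function.update_of_ne hb]
          · simp
        have h2 := Finset.sum_sub_distrib (s := Finset.univ)
          (f := fun k' => B j k' * y' k') (g := fun k' => B j k' * y k')
        linarith [this, h2]
      simp only [netCons]
      rw [hsum]; ring
    have hdiff : walrW p C x (netCons A B x y') - walrW p C x (netCons A B x y) = f t := by
      simp only [walrW]
      have h1 : (∑ j, ∫ s in (0:ℝ)..(netCons A B x y' j), p j s)
          - (∑ j, ∫ s in (0:ℝ)..(netCons A B x y j), p j s)
          = ∑ j, ((∫ s in (0:ℝ)..(netCons A B x y' j), p j s)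
              - ∫ s in (0:ℝ)..(netCons A B x y j), p j s) := by
        rw [Finset.sum_sub_distrib]
      have h2 : ∀ j, (∫ s in (0:ℝ)..(netCons A B x y' j), p j s)
          - (∫ s in (0:ℝ)..(netCons A B x y j), p j s)
          = ∫ s in (netCons A B x y j)..(netCons A B x y' j), p j s := by
        intro j
        exact intervalIntegral.integral_interval_sub_left
          ((hpcont j).intervalIntegrable _ _) ((hpcont j).intervalIntegrable _ _)
      have h3 : ∀ j, (∫ s in (netCons A B x y j)..(netCons A B x y' j), p j s)
          = (if j = τ k then (∫ s in zτ..(zτ + t), p (τ k) s) else 0)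
            + (if j = σ k then (∫ s in zσ..(zσ - t), p (σ k) s) else 0) := by
        intro j
        by_cases hjτ : j = τ k
        · subst hjτ
          have hBjk : B (τ k) k = 1 := by
            rw [hB]; simp [fun h : σ k = τ k => (hστ k) h]
          rw [hz' (τ k), hBjk]
          have hne : (τ k : Fin m) ≠ σ k := fun h => (hστ k) h.symm
          simp [hne, ← hzτdef, one_mul]
        · by_cases hjσ : j = σ k
          · subst hjσ
            have hne : ¬ (τ k = σ k) := fun h => (hστ k) h.symm
            have hBjk : B (σ k) k = -1 := by
              rw [hB]; simp [hne]
            rw [hz' (σ k), hBjk]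
            rw [if_neg (hστ k), if_pos rfl, zero_add, hzσdef]
            norm_num [sub_eq_add_neg]
          · have hBjk : B j k = 0 := by
              rw [hB, if_neg (fun h : τ k = j => hjτ h.symm),
                if_neg (fun h : σ k = j => hjσ h.symm), sub_zero]
            rw [hz' j, hBjk]
            simp [hjτ, hjσ]
      rw [sub_sub_sub_cancel_right, h1]
      calc (∑ j, ((∫ s in (0:ℝ)..(netCons A B x y' j), p j s)
              - ∫ s in (0:ℝ)..(netCons A B x y j), p j s))
          = ∑ j, ((if j = τ k then (∫ s in zτ..(zτ + t), p (τ k) s) else 0)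
            + (if j = σ k then (∫ s in zσ..(zσ - t), p (σ k) s) else 0)) := by
            refine Finset.sum_congr rfl fun j _ => ?_
            rw [h2 j, h3 j]
        _ = f t := by
            rw [Finset.sum_add_distrib, Finset.sum_ite_eq' Finset.univ (τ k),
              Finset.sum_ite_eq' Finset.univ (σ k)]
            simp [hfdef]
    have := hbr y' hy'Y
    linarith [hdiff]
  -- Step 2: derivative of f at 0
  have hf0 : f 0 = 0 := by simp [hfdef]
  have hder : HasDerivAt f (p (τ k) zτ - p (σ k) zσ) 0 := by
    have h1 : HasDerivAt (fun u => ∫ s in zτ..u, p (τ k) s) (p (τ k) zτ) zτ :=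
      ((hpcont (τ k)).integral_hasStrictDerivAt zτ zτ).hasDerivAt
    have h2 : HasDerivAt (fun u => ∫ s in zσ..u, p (σ k) s) (p (σ k) zσ) zσ :=
      ((hpcont (σ k)).integral_hasStrictDerivAt zσ zσ).hasDerivAt
    have g1 : HasDerivAt (fun t : ℝ => zτ + t) 1 0 := (hasDerivAt_id 0).const_add zτ
    have g2 : HasDerivAt (fun t : ℝ => zσ - t) (-1) 0 := (hasDerivAt_id 0).const_sub zσ
    have h1' : HasDerivAt (fun t : ℝ => ∫ s in zτ..(zτ + t), p (τ k) s) (p (τ k) zτ) 0 := by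
      have h1'' : HasDerivAt (fun u => ∫ s in zτ..u, p (τ k) s) (p (τ k) zτ) (zτ + 0) := by
        simpa using h1
      have := h1''.comp (0 : ℝ) g1
      simpa [Function.comp_def] using this
    have h2' : HasDerivAt (fun t : ℝ => ∫ s in zσ..(zσ - t), p (σ k) s) (-(p (σ k) zσ)) 0 := by
      have h2'' : HasDerivAt (fun u => ∫ s in zσ..u, p (σ k) s) (p (σ k) zσ) (zσ - 0) := by
        simpa using h2
      have := h2''.comp (0 : ℝ) g2
      simpa [Function.comp_def] using this
    have := h1'.add h2'
    simpa [hfdef, sub_eq_add_neg, Pi.add_def] using this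
  have hslope := hasDerivAt_iff_tendsto_slope.1 hder
  constructor
  · -- p σ < p τ  ⇒ y k = c k
    intro hlt
    by_contra hne
    have hylt : y k < c k := lt_of_le_of_ne (hy k).2 hne
    have hdpos : 0 < p (τ k) zτ - p (σ k) zσ := by linarith
    have hmono : 𝓝[>] (0:ℝ) ≤ 𝓝[≠] (0:ℝ) :=
      nhdsWithin_mono 0 (fun t ht => ne_of_gt ht)
    have hev1 : ∀ᶠ t in 𝓝[>] (0:ℝ), 0 < slope f 0 t :=
      (hslope.mono_left hmono).eventually (eventually_gt_nhds hdpos)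
    have hev2 : ∀ᶠ t in 𝓝[>] (0:ℝ), t < c k - y k :=
      eventually_nhdsWithin_of_eventually_nhds (eventually_lt_nhds (by linarith))
    have hev3 : ∀ᶠ t in 𝓝[>] (0:ℝ), 0 < t := eventually_mem_nhdsWithin.mono (fun t ht => ht)
    obtain ⟨t, h1, h23⟩ := (hev1.and (hev2.and hev3)).exists
    obtain ⟨h2, h3⟩ := h23
    have hslv : slope f 0 t = f t / t := by
      simp [slope, hf0]; ring
    have hft : 0 < f t := by
      have : 0 < f t / t := by rw [← hslv]; exact h1
      have := mul_pos this h3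
      rwa [div_mul_cancel₀] at this
      exact ne_of_gt h3
    have := key t (by linarith [(hy k).1]) (by linarith)
    linarith
  · -- p τ < p σ  ⇒ y k = 0
    intro hlt
    by_contra hne
    have hypos : 0 < y k := lt_of_le_of_ne (hy k).1 (Ne.symm hne)
    have hdneg : p (τ k) zτ - p (σ k) zσ < 0 := by linarith
    have hmono : 𝓝[<] (0:ℝ) ≤ 𝓝[≠] (0:ℝ) :=
      nhdsWithin_mono 0 (fun t ht => ne_of_lt ht)
    have hev1 : ∀ᶠ t in 𝓝[<] (0:ℝ), slope f 0 t < 0 :=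
      (hslope.mono_left hmono).eventually (eventually_lt_nhds hdneg)
    have hev2 : ∀ᶠ t in 𝓝[<] (0:ℝ), -(y k) < t :=
      eventually_nhdsWithin_of_eventually_nhds (eventually_gt_nhds (by linarith))
    have hev3 : ∀ᶠ t in 𝓝[<] (0:ℝ), t < 0 := eventually_mem_nhdsWithin.mono (fun t ht => ht)
    obtain ⟨t, h1, h23⟩ := (hev1.and (hev2.and hev3)).exists
    obtain ⟨h2, h3⟩ := h23
    have hslv : slope f 0 t = f t / t := by
      simp [slope, hf0]; ring
    have hft : 0 < f t := by
      have hq : f t / t < 0 := by rw [← hslv]; exact h1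
      have := mul_pos_of_neg_of_neg hq h3
      rwa [div_mul_cancel₀] at this
      exact ne_of_lt h3
    have := key t (by linarith) (by linarith [(hy k).2])
    linarith
end
end

section
/- Assume the standing concavity assumptions hold with Walrasian welfare, and additionally all inverse demand functions take the same value at zero: p_j(0) = a > 0 for all markets j. Then for every production matrix x ≥ 0 and every market-maker best response y to x, the net consumption vector z = diag(A'x)+By is componentwise nonnegative. -/
open Finset

noncomputable section

/-- with Walrasian welfare and identical positive demand intercepts
`p_j(0) = a > 0`, the net consumption at any market-maker best response is nonnegative
in every market. -/
theorem nonnegative_demand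
    (n m l : ℕ)
    (A : Fin n → Fin m → ℝ) (hA : ∀ i j, A i j = 0 ∨ A i j = 1)
    (σ τ : Fin l → Fin m) (hστ : ∀ k, σ k ≠ τ k)
    (B : Fin m → Fin l → ℝ)
    (hB : ∀ j k, B j k = (if τ k = j then (1:ℝ) else 0) - (if σ k = j then 1 else 0))
    (c : Fin l → ℝ) (hc : ∀ k, 0 < c k)
    (p : Fin m → ℝ → ℝ) (C : Fin n → (Fin m → ℝ) → ℝ) (zbar : Fin m → ℝ)
    (hCcont : ∀ i, Continuous (C i))
    (hCmono : ∀ i (v v' : Fin m → ℝ), (∀ j, v j ≤ v' j) → v ≠ v' → C i v < C i v')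
    (hCconv : ∀ i, ConvexOn ℝ {v : Fin m → ℝ | ∀ j, 0 ≤ v j} (C i))
    (hC0 : ∀ i, C i 0 = 0)
    (hpcont : ∀ j, Continuous (p j))
    (hpanti : ∀ j, StrictAnti (p j))
    (hpconc : ∀ j, ConcaveOn ℝ Set.univ (p j))
    (hzbar : ∀ j, 0 < zbar j) (hpzero : ∀ j, p j (zbar j) = 0)
    (a : ℝ) (ha : 0 < a) (hp0 : ∀ j, p j 0 = a)
    (x : Fin n → Fin m → ℝ) (hx : ∀ i j, 0 ≤ x i j)
    (y : Fin l → ℝ) (hy : inY c y)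
    (hbr : ∀ y', inY c y' →
      walrW p C x (netCons A B x y') ≤ walrW p C x (netCons A B x y)) :
    ∀ j, 0 ≤ netCons A B x y j := by
  by_contra hcon
  push_neg at hcon
  obtain ⟨j0, hj0⟩ := hcon
  set z : Fin m → ℝ := netCons A B x y with hzdef
  have hd : ∀ j, 0 ≤ ∑ i, A i j * x i j := by
    intro j
    apply Finset.sum_nonneg
    intro i _
    rcases hA i j with h | h
    · simp [h]
    · simpa [h] using hx i j
  -- S : markets with negative consumption
  set S : Finset (Fin m) := Finset.univ.filter (fun j => z j < 0) with hSdef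
  have hj0S : j0 ∈ S := by simp [hSdef, hj0]
  -- find a link with positive flow out of S into the complement
  have hexk : ∃ k, z (σ k) < 0 ∧ 0 ≤ z (τ k) ∧ 0 < y k := by
    by_contra hk
    push_neg at hk
    have hsum : (0:ℝ) ≤ ∑ j ∈ S, z j := by
      have hzeq : ∀ j, z j = (∑ i, A i j * x i j) + ∑ k, B j k * y k := fun j => rfl
      have h1 : ∑ j ∈ S, z j
          = (∑ j ∈ S, ∑ i, A i j * x i j) + ∑ j ∈ S, ∑ k, B j k * y k := by
        simp [hzeq, Finset.sum_add_distrib]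
      have h2 : ∑ j ∈ S, ∑ k, B j k * y k
          = ∑ k, ((if τ k ∈ S then (1:ℝ) else 0) - (if σ k ∈ S then 1 else 0)) * y k := by
        rw [Finset.sum_comm]
        refine Finset.sum_congr rfl fun k _ => ?_
        rw [← Finset.sum_mul]
        congr 1
        have : ∀ j ∈ S, B j k
            = (if τ k = j then (1:ℝ) else 0) - (if σ k = j then 1 else 0) :=
          fun j _ => hB j k
        rw [Finset.sum_congr rfl this, Finset.sum_sub_distrib,
          Finset.sum_ite_eq, Finset.sum_ite_eq]
      have h3 : (0:ℝ) ≤ ∑ k, ((if τ k ∈ S then (1:ℝ) else 0) - (if σ k ∈ S then 1 else 0)) * y k := by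
        apply Finset.sum_nonneg
        intro k _
        by_cases hσ : σ k ∈ S
        · have hzσ : z (σ k) < 0 := by simpa [hSdef] using hσ
          by_cases hτ : τ k ∈ S
          · simp [hσ, hτ]
          · have hzτ : 0 ≤ z (τ k) := by
              have := hτ; simp [hSdef] at this; linarith
            have : y k ≤ 0 := hk k hzσ hzτ
            have hy0 : y k = 0 := le_antisymm this (hy k).1
            simp [hy0]
          
        · by_cases hτ : τ k ∈ S
          · simpa [hσ, hτ] using (hy k).1
          · simp [hσ, hτ]
      rw [h1, h2]
      have h4 : (0:ℝ) ≤ ∑ j ∈ S, ∑ i, A i j * x i j :=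
        Finset.sum_nonneg fun j _ => hd j
      linarith
    have hneg : ∑ j ∈ S, z j < 0 := by
      apply Finset.sum_neg
      · intro j hj; simpa [hSdef] using hj
      · exact ⟨j0, hj0S⟩
    linarith
  obtain ⟨k, hzσ, hzτ, hyk⟩ := hexk
  set j := σ k with hjdef
  set t := τ k with htdef
  have hjt : j ≠ t := hστ k
  -- b = p j (z j / 2) > a
  set b : ℝ := p j (z j / 2) with hbdef
  have hab : a < b := by
    have : p j 0 < p j (z j / 2) := (hpanti j) (by linarith)
    rw [hp0 j] at this
    exact this
  -- choose δ from continuity of p t at 0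
  have hcontat : ContinuousAt (p t) 0 := (hpcont t).continuousAt
  have hδ : ∃ δ > 0, ∀ s : ℝ, |s - 0| < δ → |p t s - p t 0| < b - a := by
    have := Metric.continuousAt_iff.mp hcontat (b - a) (by linarith)
    obtain ⟨δ, hδpos, hδ⟩ := this
    exact ⟨δ, hδpos, fun s hs => hδ (by simpa [Real.dist_eq] using hs)⟩
  obtain ⟨δ, hδpos, hδ⟩ := hδ
  set ε : ℝ := min (min (y k) (-z j / 2)) (δ / 2) with hεdef
  have hεpos : 0 < ε := by
    apply lt_min (lt_min hyk (by linarith)) (by linarith)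
  have hεy : ε ≤ y k := le_trans (min_le_left _ _) (min_le_left _ _)
  have hεz : ε ≤ -z j / 2 := le_trans (min_le_left _ _) (min_le_right _ _)
  have hεδ : ε < δ := lt_of_le_of_lt (min_le_right _ _) (by linarith)
  -- the perturbed flow
  set y' : Fin l → ℝ := Function.update y k (y k - ε) with hy'def
  have hy' : inY c y' := by
    intro k'
    by_cases h : k' = k
    · subst h
      constructor
      · simp [hy'def, Function.update_self]; linarith
      · simp [hy'def, Function.update_self]
        have := (hy k').2; linarith
    · simp only [hy'def, Function.update_of_ne h]
      exact hy k'
  set z' : Fin m → ℝ := netCons A B x y' with hz'def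
  -- effect of the update on each market
  have hupd : ∀ j', z' j' = z j' - ε * B j' k := by
    intro j'
    have hterm : ∀ k', B j' k' * y' k'
        = B j' k' * y k' - (if k' = k then ε * B j' k else 0) := by
      intro k'
      by_cases h : k' = k
      · subst h
        simp [hy'def, Function.update_self]; ring
      · simp [hy'def, Function.update_of_ne h, h]
    have : (∑ k', B j' k' * y' k')
        = (∑ k', B j' k' * y k') - ε * B j' k := by
      rw [Finset.sum_congr rfl fun k' _ => hterm k', Finset.sum_sub_distrib,
        Finset.sum_ite_eq']
      simp
    show (∑ i, A i j' * x i j') + ∑ k', B j' k' * y' k' = _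
    rw [this]
    show _ = ((∑ i, A i j' * x i j') + ∑ k', B j' k' * y k') - ε * B j' k
    ring
  have hBjk : B j k = -1 := by
    rw [hB]
    have h1 : ¬ (τ k = j) := fun h => hjt h.symm
    simp [h1]
    exact hjdef.symm
  have hBtk : B t k = 1 := by
    rw [hB]
    have h1 : ¬ (σ k = t) := hστ k
    simp [h1]
    exact htdef.symm
  have hz'j : z' j = z j + ε := by rw [hupd j, hBjk]; ring
  have hz't : z' t = z t - ε := by rw [hupd t, hBtk]; ring
  have hz'other : ∀ j', j' ≠ j → j' ≠ t → z' j' = z j' := by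
    intro j' h1 h2
    have hB0 : B j' k = 0 := by
      rw [hB]
      have ht1 : ¬ (τ k = j') := fun h => h2 h.symm
      have ht2 : ¬ (σ k = j') := fun h => h1 h.symm
      simp [ht1, ht2]
    rw [hupd j', hB0]; ring
  -- integrability
  have hint : ∀ (j' : Fin m) (u v : ℝ), IntervalIntegrable (p j') MeasureTheory.volume u v :=
    fun j' u v => (hpcont j').intervalIntegrable u v
  -- welfare difference
  set F : Fin m → ℝ := fun j' => (∫ s in (0:ℝ)..(z' j'), p j' s) - ∫ s in (0:ℝ)..(z j'), p j' s
    with hFdef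
  have hwdiff : walrW p C x z' - walrW p C x z = ∑ j', F j' := by
    simp only [walrW, hFdef]
    rw [Finset.sum_sub_distrib]
    ring
  have hFother : ∀ j' , j' ≠ j → j' ≠ t → F j' = 0 := by
    intro j' h1 h2
    simp [hFdef, hz'other j' h1 h2]
  have hsumF : ∑ j', F j' = F j + F t := by
    rw [← Finset.sum_pair hjt]
    symm
    apply Finset.sum_subset (Finset.subset_univ _)
    intro j' _ hj'
    simp only [Finset.mem_insert, Finset.mem_singleton] at hj'
    push_neg at hj'
    exact hFother j' hj'.1 hj'.2
  -- lower bound on F j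
  have hFj : ε * b ≤ F j := by
    have hadd : (∫ s in (0:ℝ)..(z j), p j s) + (∫ s in (z j)..(z j + ε), p j s)
        = ∫ s in (0:ℝ)..(z j + ε), p j s :=
      intervalIntegral.integral_add_adjacent_intervals (hint j 0 (z j)) (hint j (z j) (z j + ε))
    have hFjeq : F j = ∫ s in (z j)..(z j + ε), p j s := by
      simp only [hFdef, hz'j]
      linarith
    rw [hFjeq]
    have hle : z j ≤ z j + ε := by linarith
    have hmono : (∫ s in (z j)..(z j + ε), (fun _ => b) s)
        ≤ ∫ s in (z j)..(z j + ε), p j s := by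
      apply intervalIntegral.integral_mono_on hle
        (intervalIntegrable_const) (hint j _ _)
      intro s hs
      have hs2 : s ≤ z j / 2 := by
        have := hs.2
        linarith
      exact (hpanti j).antitone hs2
    have hconst : (∫ s in (z j)..(z j + ε), (fun _ => b) s) = ε * b := by
      rw [intervalIntegral.integral_const, smul_eq_mul]
      ring
    linarith
  -- upper bound on the loss at t
  have hFt : -(ε * p t (-ε)) ≤ F t := by
    have hadd : (∫ s in (0:ℝ)..(z t - ε), p t s) + (∫ s in (z t - ε)..(z t), p t s)
        = ∫ s in (0:ℝ)..(z t), p t s :=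
      intervalIntegral.integral_add_adjacent_intervals (hint t 0 (z t - ε)) (hint t (z t - ε) (z t))
    have hFteq : F t = -(∫ s in (z t - ε)..(z t), p t s) := by
      simp only [hFdef, hz't]
      linarith
    rw [hFteq]
    have hle : z t - ε ≤ z t := by linarith
    have hmono : (∫ s in (z t - ε)..(z t), p t s)
        ≤ ∫ s in (z t - ε)..(z t), (fun _ => p t (-ε)) s := by
      apply intervalIntegral.integral_mono_on hle (hint t _ _) intervalIntegrable_const
      intro s hs
      have hs2 : -ε ≤ s := by
        have := hs.1
        linarith
      exact (hpanti t).antitone hs2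
    have hconst : (∫ s in (z t - ε)..(z t), (fun _ => p t (-ε)) s) = ε * p t (-ε) := by
      rw [intervalIntegral.integral_const, smul_eq_mul]
      ring
    linarith
  -- p t (-ε) < b
  have hptε : p t (-ε) < b := by
    have := hδ (-ε) (by rw [sub_zero, abs_neg, abs_of_pos hεpos]; exact hεδ)
    rw [hp0 t] at this
    have := abs_lt.mp this
    linarith [this.1, this.2]
  -- conclude strict improvement, contradiction
  have himp : walrW p C x z < walrW p C x z' := by
    have h1 : 0 < F j + F t := by nlinarith
    rw [← hsumF, ← hwdiff] at h1
    linarith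
  have := hbr y' hy'
  rw [← hz'def] at this
  linarith
end
end
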